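/- arXiv:1110.6390 — 7 statements merged into one kernel-verified Lean document; each statement's English description precedes it below -/
import Mathlib

section
/- In any loop L, the Moufang identity (m1): z(x(yx)) = ((zx)y)x for all x,y,z, is equivalent to the Moufang identity (m2): x(y(xz)) = ((xy)x)z for all x,y,z. -/
/-- A loop: a quasigroup with a two-sided identity element. -/
class Loop (L : Type*) extends Mul L, One L where
  one_mul : ∀ a : L, 1 * a = a
  mul_one : ∀ a : L, a * 1 = a
  left_bij : ∀ a : L, Function.Bijective fun x : L => a * x
  right_bij : ∀ a : L, Function.Bijective fun x : L => x * a

/-!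
Proof idea: (m1) with `z := 1` gives flexibility `x(yx) = (xy)x`, so (m1) is the right Bol identity
`z((xy)x) = ((zx)y)x`. Choosing `y` and `z` as suitable one-sided inverses, this yields the right and
left inverse properties and then the antiautomorphic inverse property `(xy)⁻¹ = y⁻¹x⁻¹`. Inverting
the right Bol identity therefore gives the left Bol identity, which with flexibility is (m2).
The converse is the same implication in the opposite loop, where (m1) and (m2) trade places.
-/

def IsRightMoufang (L : Type*) [Mul L] : Prop :=
  ∀ x y z : L, z * (x * (y * x)) = ((z * x) * y) * x

def IsLeftMoufang (L : Type*) [Mul L] : Prop :=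
  ∀ x y z : L, x * (y * (x * z)) = ((x * y) * x) * z

open MulOpposite

theorem isRightMoufang_mulOpposite_iff {L : Type*} [Mul L] :
    IsRightMoufang Lᵐᵒᵖ ↔ IsLeftMoufang L :=
  ⟨fun h x y z => op_injective (h (op x) (op y) (op z)).symm,
    fun h x y z => unop_injective (h x.unop y.unop z.unop).symm⟩

theorem isLeftMoufang_mulOpposite_iff {L : Type*} [Mul L] :
    IsLeftMoufang Lᵐᵒᵖ ↔ IsRightMoufang L :=
  ⟨fun h x y z => op_injective (h (op x) (op y) (op z)).symm,
    fun h x y z => unop_injective (h x.unop y.unop z.unop).symm⟩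

namespace Loop

variable {L : Type*} [Loop L]

instance : Loop Lᵐᵒᵖ where
  one_mul a := unop_injective (Loop.mul_one a.unop)
  mul_one a := unop_injective (Loop.one_mul a.unop)
  left_bij a := (opEquiv.bijective.comp (Loop.right_bij a.unop)).comp opEquiv.symm.bijective
  right_bij a := (opEquiv.bijective.comp (Loop.left_bij a.unop)).comp opEquiv.symm.bijective

theorem mul_right_cancel {a x y : L} (h : x * a = y * a) : x = y :=
  (Loop.right_bij a).injective h

noncomputable def leftInv (x : L) : L :=
  Function.surjInv (Loop.right_bij x).surjective 1

theorem leftInv_mul (x : L) : leftInv x * x = 1 :=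
  Function.surjInv_eq (Loop.right_bij x).surjective 1

end Loop

namespace IsRightMoufang

open Loop

variable {L : Type*} [Loop L]

theorem flexible (h : IsRightMoufang L) (x y : L) : x * (y * x) = (x * y) * x := by
  simpa only [Loop.one_mul] using h x y 1

theorem rightBol (h : IsRightMoufang L) (x y z : L) :
    z * ((x * y) * x) = ((z * x) * y) * x := by
  rw [← h.flexible]
  exact h x y z

theorem mul_mul_leftInv (h : IsRightMoufang L) (z x : L) : (z * x) * leftInv x = z := by
  apply mul_right_cancel (a := x)
  rw [← h x (leftInv x) z, leftInv_mul, Loop.mul_one]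

theorem mul_leftInv (h : IsRightMoufang L) (x : L) : x * leftInv x = 1 := by
  simpa only [Loop.one_mul] using h.mul_mul_leftInv 1 x

theorem leftInv_leftInv (h : IsRightMoufang L) (x : L) : leftInv (leftInv x) = x :=
  mul_right_cancel (a := leftInv x) (by rw [leftInv_mul, h.mul_leftInv])

theorem leftInv_mul_mul (h : IsRightMoufang L) (x w : L) : leftInv x * (x * w) = w := by
  obtain ⟨y, rfl⟩ := (Loop.right_bij x).surjective w
  simpa only [leftInv_mul, Loop.one_mul, ← h.flexible] using h.rightBol x y (leftInv x)

theorem leftInv_mul_eq (h : IsRightMoufang L) (x y : L) :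
    leftInv (x * y) = leftInv y * leftInv x := by
  set u := leftInv y * leftInv x
  have hBol : u * ((x * y) * x) = x := by
    rw [h.rightBol, ← h.leftInv_leftInv x, h.mul_mul_leftInv, h.leftInv_leftInv, leftInv_mul,
      Loop.one_mul]
  have hxy : x * y = leftInv u :=
    mul_right_cancel ((h.leftInv_mul_mul u _).symm.trans (congrArg (leftInv u * ·) hBol))
  rw [hxy, h.leftInv_leftInv]

theorem isLeftMoufang (h : IsRightMoufang L) : IsLeftMoufang L := by
  intro x y z
  have hBol := congrArg leftInv (h.rightBol (leftInv x) (leftInv y) (leftInv z))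
  simp only [h.leftInv_mul_eq, h.leftInv_leftInv] at hBol
  rw [← h.flexible, hBol]

end IsRightMoufang

/-- In any loop, the Moufang identity (m1) is equivalent to the Moufang identity (m2). -/
theorem moufang_m1_iff_m2 (L : Type*) [Loop L] :
    (∀ x y z : L, z * (x * (y * x)) = ((z * x) * y) * x) ↔
    (∀ x y z : L, x * (y * (x * z)) = ((x * y) * x) * z) :=
  ⟨IsRightMoufang.isLeftMoufang, fun h =>
    isLeftMoufang_mulOpposite_iff.mp (isRightMoufang_mulOpposite_iff.mpr h).isLeftMoufang⟩
end

section
/- Let G be a group and let M(G,2) = G ⊎ Gu be the Chein loop with multiplication extending that of G and satisfying g₁(g₂u) = (g₂g₁)u, (g₁u)g₂ = (g₁g₂⁻¹)u, and (g₁u)(g₂u) = g₂⁻¹g₁. Then M(G,2) is a Moufang loop, i.e., it satisfies z(x(yx)) = ((zx)y)x for all x,y,z. -/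
/-- The Chein loop `M(G,2) = G ⊎ Gu`, realized on `G ⊕ G` where `Sum.inl g = g`
and `Sum.inr g = g·u`, with multiplication extending that of `G` and satisfying
(c1) `g₁(g₂u) = (g₂g₁)u`, (c2) `(g₁u)g₂ = (g₁g₂⁻¹)u`, (c3) `(g₁u)(g₂u) = g₂⁻¹g₁`. -/
instance cheinMul (G : Type*) [Group G] : Mul (G ⊕ G) :=
  ⟨fun x y =>
    match x, y with
    | .inl a, .inl b => .inl (a * b)
    | .inl a, .inr b => .inr (b * a)
    | .inr a, .inl b => .inr (a * b⁻¹)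
    | .inr a, .inr b => .inl (b⁻¹ * a)⟩

instance cheinOne (G : Type*) [Group G] : One (G ⊕ G) := ⟨Sum.inl 1⟩

/-!
Every element of `M(G,2)` has a two-sided inverse that cancels on both sides: `g⁻¹` for `g`, and
`gu` for `gu`, since `(gu)(gu) = g⁻¹g = 1`. Hence all translations are bijective. The Moufang
identity is checked by splitting each of `x, y, z` into its two summands; each of the eight cases
is an identity in `G`.
-/

namespace Chein

variable {G : Type*} [Group G]

@[simp] lemma inl_mul_inl (a b : G) : (Sum.inl a : G ⊕ G) * Sum.inl b = Sum.inl (a * b) := rfl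
@[simp] lemma inl_mul_inr (a b : G) : (Sum.inl a : G ⊕ G) * Sum.inr b = Sum.inr (b * a) := rfl
@[simp] lemma inr_mul_inl (a b : G) : (Sum.inr a : G ⊕ G) * Sum.inl b = Sum.inr (a * b⁻¹) := rfl
@[simp] lemma inr_mul_inr (a b : G) : (Sum.inr a : G ⊕ G) * Sum.inr b = Sum.inl (b⁻¹ * a) := rfl
@[simp] lemma one_def : (1 : G ⊕ G) = Sum.inl 1 := rfl

lemma one_mul (x : G ⊕ G) : 1 * x = x := by
  rcases x with a | a <;> simp

lemma mul_one (x : G ⊕ G) : x * 1 = x := by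
  rcases x with a | a <;> simp

def inv : G ⊕ G → G ⊕ G := Sum.elim (fun g => Sum.inl g⁻¹) Sum.inr

@[simp] lemma inv_inl (g : G) : inv (Sum.inl g) = Sum.inl g⁻¹ := rfl
@[simp] lemma inv_inr (g : G) : inv (Sum.inr g) = Sum.inr g := rfl

lemma inv_mul_cancel_left (a x : G ⊕ G) : inv a * (a * x) = x := by
  rcases a with g | g <;> rcases x with b | b <;> simp [mul_assoc]

lemma mul_inv_cancel_left (a x : G ⊕ G) : a * (inv a * x) = x := by
  rcases a with g | g <;> rcases x with b | b <;> simp [mul_assoc]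

lemma mul_inv_cancel_right (x a : G ⊕ G) : x * a * inv a = x := by
  rcases a with g | g <;> rcases x with b | b <;> simp [mul_assoc]

lemma inv_mul_cancel_right (x a : G ⊕ G) : x * inv a * a = x := by
  rcases a with g | g <;> rcases x with b | b <;> simp [mul_assoc]

lemma bijective_mul_left (a : G ⊕ G) : Function.Bijective fun x : G ⊕ G => a * x :=
  Function.bijective_iff_has_inverse.mpr
    ⟨fun x => inv a * x, inv_mul_cancel_left a, mul_inv_cancel_left a⟩

lemma bijective_mul_right (a : G ⊕ G) : Function.Bijective fun x : G ⊕ G => x * a :=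
  Function.bijective_iff_has_inverse.mpr
    ⟨fun x => x * inv a, fun x => mul_inv_cancel_right x a, fun x => inv_mul_cancel_right x a⟩

lemma moufang (x y z : G ⊕ G) : z * (x * (y * x)) = z * x * y * x := by
  rcases x with x | x <;> rcases y with y | y <;> rcases z with z | z <;> simp [mul_assoc]

end Chein

/-- The Chein loop `M(G,2)` is a Moufang loop: it is a loop (with identity `1` and
bijective left and right translations) satisfying the Moufang identity
(m1) `z(x(yx)) = ((zx)y)x`. -/
theorem chein_isMoufangLoop (G : Type*) [Group G] :
    (∀ x : G ⊕ G, 1 * x = x ∧ x * 1 = x) ∧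
    (∀ a : G ⊕ G, Function.Bijective fun x : G ⊕ G => a * x) ∧
    (∀ a : G ⊕ G, Function.Bijective fun x : G ⊕ G => x * a) ∧
    (∀ x y z : G ⊕ G, z * (x * (y * x)) = ((z * x) * y) * x) :=
  ⟨fun x => ⟨Chein.one_mul x, Chein.mul_one x⟩, Chein.bijective_mul_left,
    Chein.bijective_mul_right, Chein.moufang⟩
end

section
/- The Chein loop M(G,2) is a group if and only if G is abelian. -/
namespace CheinLoop

variable {G : Type*} [Group G]

@[simp] lemma inl_mul_inl (a b : G) : (.inl a : G ⊕ G) * .inl b = .inl (a * b) := rfl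
@[simp] lemma inl_mul_inr (a b : G) : (.inl a : G ⊕ G) * .inr b = .inr (b * a) := rfl
@[simp] lemma inr_mul_inl (a b : G) : (.inr a : G ⊕ G) * .inl b = .inr (a * b⁻¹) := rfl
@[simp] lemma inr_mul_inr (a b : G) : (.inr a : G ⊕ G) * .inr b = .inl (b⁻¹ * a) := rfl

lemma mul_comm_of_mul_assoc (h : ∀ x y z : G ⊕ G, x * y * z = x * (y * z)) (a b : G) :
    a * b = b * a := by
  simpa using h (.inl a) (.inl b) (.inr 1)

lemma mul_assoc_of_mul_comm (hc : ∀ a b : G, a * b = b * a) (x y z : G ⊕ G) :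
    x * y * z = x * (y * z) := by
  have left_comm (a b c : G) : a * (b * c) = b * (a * c) := by
    rw [← mul_assoc, hc a, mul_assoc]
  rcases x with a | a <;> rcases y with b | b <;> rcases z with c | c <;>
    simp [mul_assoc, hc, left_comm]

end CheinLoop

/-- The Chein loop `M(G,2)` is a group (i.e. its multiplication is associative)
if and only if `G` is abelian. -/
theorem chein_group_iff_abelian (G : Type*) [Group G] :
    (∀ x y z : G ⊕ G, (x * y) * z = x * (y * z)) ↔ (∀ a b : G, a * b = b * a) :=
  ⟨CheinLoop.mul_comm_of_mul_assoc, CheinLoop.mul_assoc_of_mul_comm⟩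
end

section
/- Let L be a Moufang loop containing a group T generated by a set S, and an element u such that ((g₁g₂)u)² = 1 for all g₁,g₂ ∈ S ∪ {e}. Then for all generators sᵢ,sⱼ ∈ S the Chein relations hold: sᵢ(sⱼu) = (sⱼsᵢ)u, (sᵢu)sⱼ = (sᵢsⱼ⁻¹)u, and (sᵢu)(sⱼu) = sⱼ⁻¹sᵢ. -/
/-- A Moufang loop: a loop (a quasigroup with two-sided identity) satisfying the
Moufang identities (m1) `z(x(yx)) = ((zx)y)x`, (m2) `x(y(xz)) = ((xy)x)z`,
(m3) `(xy)(zx) = x((yz)x)`. -/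
class MoufangLoop (L : Type*) extends Mul L, One L where
  one_mul : ∀ a : L, 1 * a = a
  mul_one : ∀ a : L, a * 1 = a
  left_bij : ∀ a : L, Function.Bijective fun x : L => a * x
  right_bij : ∀ a : L, Function.Bijective fun x : L => x * a
  m1 : ∀ x y z : L, z * (x * (y * x)) = ((z * x) * y) * x
  m2 : ∀ x y z : L, x * (y * (x * z)) = ((x * y) * x) * z
  m3 : ∀ x y z : L, (x * y) * (z * x) = x * ((y * z) * x)

/-- The subset `T` of the Moufang loop `L`, together with the inversion map `inv`,
forms a subgroup of `L`: it contains the identity, is closed under multiplication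
and inversion, multiplication restricted to `T` is associative, and `inv` provides
two-sided inverses in `T`. -/
structure IsSubgroupOfLoop {L : Type*} [MoufangLoop L] (T : Set L) (inv : L → L) : Prop where
  one_mem : (1 : L) ∈ T
  mul_mem : ∀ a ∈ T, ∀ b ∈ T, a * b ∈ T
  inv_mem : ∀ a ∈ T, inv a ∈ T
  assoc : ∀ a ∈ T, ∀ b ∈ T, ∀ c ∈ T, (a * b) * c = a * (b * c)
  mul_inv : ∀ a ∈ T, a * inv a = 1
  inv_mul : ∀ a ∈ T, inv a * a = 1

/-- `T` is generated (as a group) by the subset `S`: every element of `T` is an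
iterated product of elements of `S` and their inverses. -/
def GeneratedBy {L : Type*} [MoufangLoop L] (T : Set L) (inv : L → L) (S : Set L) : Prop :=
  S ⊆ T ∧ ∀ w ∈ T, ∃ l : List L,
    (∀ x ∈ l, x ∈ S ∨ ∃ s ∈ S, x = inv s) ∧ w = l.foldr (· * ·) 1

/-!
Squaring to one makes `u` an involution and turns `(gu)² = 1` into the twisting rule
`gu = ug⁻¹`, for `g` a generator or a product of two generators. Each Chein relation then
follows by moving `u` across a product with one of the Moufang identities and applying the
twisting rule; inverses are taken in the loop, where they agree with those of `T`.
-/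

namespace MoufangLoop

variable {L : Type*} [MoufangLoop L]

theorem mul_right_cancel {a x y : L} (h : x * a = y * a) : x = y :=
  (right_bij a).1 h

noncomputable def inv (a : L) : L := ((right_bij a).2 1).choose

theorem inv_mul_cancel (a : L) : inv a * a = 1 := ((right_bij a).2 1).choose_spec

theorem inv_mul_cancel_left (a w : L) : inv a * (a * w) = w := by
  obtain ⟨y, rfl⟩ := (right_bij a).2 w
  simpa only [inv_mul_cancel, MoufangLoop.one_mul] using m1 a y (inv a)

theorem eq_inv_of_mul_eq_one_left {a b : L} (h : b * a = 1) : b = inv a :=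
  mul_right_cancel (h.trans (inv_mul_cancel a).symm)

theorem eq_inv_of_mul_eq_one_right {a b : L} (h : a * b = 1) : b = inv a := by
  simpa only [h, MoufangLoop.mul_one] using (inv_mul_cancel_left a b).symm

theorem mul_inv_cancel (a : L) : a * inv a = 1 := by
  obtain ⟨r, hr⟩ := (left_bij a).2 1
  rwa [← eq_inv_of_mul_eq_one_right hr]

theorem mul_inv_cancel_right (z a : L) : z * a * inv a = z := by
  have h := m1 a (inv a) z
  rw [inv_mul_cancel, MoufangLoop.mul_one] at h
  exact mul_right_cancel h.symm

theorem mul_inv_rev (a b : L) : inv (a * b) = inv b * inv a := by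
  have h : inv (a * b) * a = inv b := by
    simpa only [mul_inv_cancel_right] using inv_mul_cancel_left (a * b) (inv b)
  rw [← h, mul_inv_cancel_right]

theorem inv_eq_self_of_mul_self_eq_one {a : L} (h : a * a = 1) : inv a = a :=
  (eq_inv_of_mul_eq_one_left h).symm

section Involution

variable {u g : L}

theorem mul_mul_cancel_left_of_mul_self_eq_one (hu : u * u = 1) (w : L) : u * (u * w) = w := by
  simpa only [inv_eq_self_of_mul_self_eq_one hu] using inv_mul_cancel_left u w

theorem mul_eq_mul_inv_of_mul_self_eq_one (hu : u * u = 1) (hg : g * u * (g * u) = 1) :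
    g * u = u * inv g := by
  rw [← inv_eq_self_of_mul_self_eq_one hg, mul_inv_rev, inv_eq_self_of_mul_self_eq_one hu]

theorem mul_mul_eq_inv_of_mul_self_eq_one (hu : u * u = 1) (hg : g * u * (g * u) = 1) :
    u * (g * u) = inv g := by
  rw [mul_eq_mul_inv_of_mul_self_eq_one hu hg, mul_mul_cancel_left_of_mul_self_eq_one hu]

theorem mul_eq_inv_mul_of_mul_self_eq_one (hu : u * u = 1) (hg : g * u * (g * u) = 1) :
    u * g = inv g * u := by
  have h : u * g * u = inv g := by
    simpa only [MoufangLoop.one_mul, mul_mul_eq_inv_of_mul_self_eq_one hu hg] using (m1 u g 1).symm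
  rw [← mul_inv_cancel_right (u * g) u, h, inv_eq_self_of_mul_self_eq_one hu]

theorem mul_mul_eq_mul_inv_mul_of_mul_self_eq_one (hu : u * u = 1)
    (hg : g * u * (g * u) = 1) (z : L) : z * u * g = z * inv g * u := by
  have h : z * u * g * u = z * inv g := by
    rw [← m1, mul_mul_eq_inv_of_mul_self_eq_one hu hg]
  rw [← mul_inv_cancel_right (z * u * g) u, h, inv_eq_self_of_mul_self_eq_one hu]

end Involution

section Chein

variable {u a b : L}

theorem chein_relation_one (hu : u * u = 1) (ha : a * u * (a * u) = 1)
    (hb : b * u * (b * u) = 1) (hba : b * a * u * (b * a * u) = 1) :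
    a * (b * u) = b * a * u :=
  calc a * (b * u) = u * (u * a) * (b * u) := by rw [mul_mul_cancel_left_of_mul_self_eq_one hu]
    _ = u * (inv a * u * b * u) := by rw [m3, mul_eq_inv_mul_of_mul_self_eq_one hu ha]
    _ = u * (inv a * inv b) := by rw [← m1, mul_mul_eq_inv_of_mul_self_eq_one hu hb]
    _ = b * a * u := by rw [← mul_inv_rev, mul_eq_mul_inv_of_mul_self_eq_one hu hba]

theorem chein_relation_three (hu : u * u = 1) (ha : a * u * (a * u) = 1)
    (hba : b * a * u * (b * a * u) = 1) :
    a * u * (b * u) = inv b * a := by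
  have hba_a : b * a * u * a = b * u := by
    rw [mul_mul_eq_mul_inv_mul_of_mul_self_eq_one hu ha, mul_inv_cancel_right]
  calc a * u * (b * u) = a * u * (b * a * u * a) := by rw [hba_a]
    _ = a * (inv a * inv b * a) := by
      rw [m3, mul_mul_eq_inv_of_mul_self_eq_one hu hba, mul_inv_rev]
    _ = inv b * a := by rw [← m3, mul_inv_cancel, MoufangLoop.one_mul]

end Chein

end MoufangLoop

/-- Lemma 2.2: if `L` is a Moufang loop containing a group `T` generated by a set `S`,
and `u ∈ L` satisfies `((g₁g₂)u)² = 1` for all `g₁, g₂ ∈ S ∪ {e}`, then the Chein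
relations (c1), (c2), (c3) hold for any `sᵢ, sⱼ ∈ S`. -/
theorem chein_relations_on_generators {L : Type*} [MoufangLoop L]
    (T : Set L) (inv : L → L) (S : Set L) (u : L)
    (hT : IsSubgroupOfLoop T inv) (hgen : GeneratedBy T inv S)
    (hu : ∀ g₁ ∈ insert (1 : L) S, ∀ g₂ ∈ insert (1 : L) S,
      ((g₁ * g₂) * u) * ((g₁ * g₂) * u) = 1) :
    ∀ si ∈ S, ∀ sj ∈ S,
      si * (sj * u) = (sj * si) * u ∧
      (si * u) * sj = (si * inv sj) * u ∧
      (si * u) * (sj * u) = inv sj * si := by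
  intro si hsi sj hsj
  have hsq : ∀ g ∈ insert (1 : L) S, g * u * (g * u) = 1 := fun g hg => by
    simpa only [MoufangLoop.one_mul] using hu 1 (Set.mem_insert 1 S) g hg
  have huu : u * u = 1 := by simpa only [MoufangLoop.one_mul] using hsq 1 (Set.mem_insert 1 S)
  have hsi_sq := hsq si (Set.mem_insert_of_mem 1 hsi)
  have hsj_sq := hsq sj (Set.mem_insert_of_mem 1 hsj)
  have hji_sq := hu sj (Set.mem_insert_of_mem 1 hsj) si (Set.mem_insert_of_mem 1 hsi)
  have hinv : inv sj = MoufangLoop.inv sj :=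
    MoufangLoop.eq_inv_of_mul_eq_one_left (hT.inv_mul sj (hgen.1 hsj))
  rw [hinv]
  exact ⟨MoufangLoop.chein_relation_one huu hsi_sq hsj_sq hji_sq,
    MoufangLoop.mul_mul_eq_mul_inv_mul_of_mul_self_eq_one huu hsj_sq si,
    MoufangLoop.chein_relation_three huu hsi_sq hji_sq⟩
end

section
/- Let L be a Moufang loop, T ≤ L a subgroup, and u ∈ L with uwu = w⁻¹ for all w ∈ T. Then for any w₁, w₂ ∈ T, the relation w₁(w₂u) = (w₂w₁)u holds if and only if (w₂u)w₁⁻¹ = (w₂w₁)u holds. -/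
/-!
Both relations in fact hold outright. The hypothesis `uwu = w⁻¹` at `w = 1` makes `u` an
involution, so `u` can be cancelled on either side and `wu = uw⁻¹`, `uw = w⁻¹u` on `T`.
After multiplying (c1) by `u` on the left, the identity `x(y(xz)) = ((xy)x)z` turns both sides
into `w₁⁻¹w₂⁻¹`; after multiplying (c2) by `u` on the right, `z(x(yx)) = ((zx)y)x` turns both
sides into `w₂w₁`.
-/

namespace MoufangLoop

variable {L : Type*} [MoufangLoop L]

theorem left_alternative (x z : L) : x * (x * z) = (x * x) * z := by
  simpa only [MoufangLoop.one_mul, MoufangLoop.mul_one] using m2 x 1 z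

theorem right_alternative (x z : L) : (z * x) * x = z * (x * x) := by
  simpa only [MoufangLoop.one_mul, MoufangLoop.mul_one] using (m1 x 1 z).symm

theorem cancel_left {a b c : L} (h : a * b = a * c) : b = c := (left_bij a).1 h

theorem cancel_right {a b c : L} (h : b * a = c * a) : b = c := (right_bij a).1 h

end MoufangLoop

namespace IsSubgroupOfLoop

open MoufangLoop

variable {L : Type*} [MoufangLoop L] {T : Set L} {inv : L → L}

theorem inv_one (hT : IsSubgroupOfLoop T inv) : inv 1 = 1 := by
  simpa only [MoufangLoop.one_mul] using hT.mul_inv 1 hT.one_mem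

theorem inv_inv (hT : IsSubgroupOfLoop T inv) {w : L} (hw : w ∈ T) : inv (inv w) = w :=
  cancel_left (a := inv w) <| by rw [hT.mul_inv _ (hT.inv_mem w hw), hT.inv_mul w hw]

theorem inv_mul_rev (hT : IsSubgroupOfLoop T inv) {a b : L} (ha : a ∈ T) (hb : b ∈ T) :
    inv (a * b) = inv b * inv a := by
  refine cancel_right (a := a * b) ?_
  rw [hT.inv_mul _ (hT.mul_mem _ ha _ hb),
    hT.assoc _ (hT.inv_mem _ hb) _ (hT.inv_mem _ ha) _ (hT.mul_mem _ ha _ hb),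
    ← hT.assoc _ (hT.inv_mem _ ha) _ ha _ hb, hT.inv_mul _ ha, MoufangLoop.one_mul,
    hT.inv_mul _ hb]

end IsSubgroupOfLoop

section InvertingElement

open MoufangLoop

variable {L : Type*} [MoufangLoop L] {T : Set L} {inv : L → L} {u : L}

theorem mul_self_eq_one_of_inverting (hT : IsSubgroupOfLoop T inv)
    (hu : ∀ w ∈ T, (u * w) * u = inv w) : u * u = 1 := by
  simpa only [MoufangLoop.mul_one, hT.inv_one] using hu 1 hT.one_mem

theorem mul_mul_cancel_of_inverting (hT : IsSubgroupOfLoop T inv)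
    (hu : ∀ w ∈ T, (u * w) * u = inv w) (z : L) : u * (u * z) = z := by
  rw [left_alternative, mul_self_eq_one_of_inverting hT hu, MoufangLoop.one_mul]

theorem mul_mul_cancel_right_of_inverting (hT : IsSubgroupOfLoop T inv)
    (hu : ∀ w ∈ T, (u * w) * u = inv w) (z : L) : (z * u) * u = z := by
  rw [right_alternative, mul_self_eq_one_of_inverting hT hu, MoufangLoop.mul_one]

theorem mul_eq_inv_mul_of_inverting (hT : IsSubgroupOfLoop T inv)
    (hu : ∀ w ∈ T, (u * w) * u = inv w) {w : L} (hw : w ∈ T) : u * w = inv w * u := by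
  rw [← hu w hw, mul_mul_cancel_right_of_inverting hT hu]

theorem mul_eq_mul_inv_of_inverting (hT : IsSubgroupOfLoop T inv)
    (hu : ∀ w ∈ T, (u * w) * u = inv w) {w : L} (hw : w ∈ T) : w * u = u * inv w := by
  have h := hu (inv w) (hT.inv_mem w hw)
  rw [hT.inv_inv hw] at h
  conv_lhs => rw [← h]
  exact mul_mul_cancel_right_of_inverting hT hu _

theorem chein_c1_of_inverting (hT : IsSubgroupOfLoop T inv)
    (hu : ∀ w ∈ T, (u * w) * u = inv w) {w₁ w₂ : L} (h₁ : w₁ ∈ T) (h₂ : w₂ ∈ T) :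
    w₁ * (w₂ * u) = (w₂ * w₁) * u := by
  refine cancel_left (a := u) ?_
  rw [mul_eq_mul_inv_of_inverting hT hu h₂,
    mul_eq_mul_inv_of_inverting hT hu (hT.mul_mem _ h₂ _ h₁), m2, hu _ h₁,
    mul_mul_cancel_of_inverting hT hu, hT.inv_mul_rev h₂ h₁]

theorem chein_c2_of_inverting (hT : IsSubgroupOfLoop T inv)
    (hu : ∀ w ∈ T, (u * w) * u = inv w) {w₁ w₂ : L} (h₁ : w₁ ∈ T) :
    (w₂ * u) * inv w₁ = (w₂ * w₁) * u := by
  refine cancel_right (a := u) ?_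
  rw [mul_mul_cancel_right_of_inverting hT hu, ← m1, ← mul_eq_inv_mul_of_inverting hT hu h₁,
    mul_mul_cancel_of_inverting hT hu]

end InvertingElement

/-- Lemma 2.7: if `L` is a Moufang loop, `T ≤ L` a subgroup, and `u ∈ L` satisfies
`uwu = w⁻¹` for all `w ∈ T`, then for any `w₁, w₂ ∈ T` the Chein relation
`w₁(w₂u) = (w₂w₁)u` holds if and only if `(w₂u)w₁⁻¹ = (w₂w₁)u` holds. -/
theorem chein_c1_iff_c2 {L : Type*} [MoufangLoop L]
    (T : Set L) (inv : L → L) (u : L)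
    (hT : IsSubgroupOfLoop T inv)
    (hu : ∀ w ∈ T, (u * w) * u = inv w) :
    ∀ w₁ ∈ T, ∀ w₂ ∈ T,
      (w₁ * (w₂ * u) = (w₂ * w₁) * u ↔ (w₂ * u) * inv w₁ = (w₂ * w₁) * u) :=
  fun _ h₁ _ h₂ =>
    iff_of_true (chein_c1_of_inverting hT hu h₁ h₂) (chein_c2_of_inverting hT hu h₁)
end

section
/- For a group G and g ∈ G, the map φ_g : M(G,2) → M(G,2) fixing G pointwise and sending g₁u ↦ (gg₁)u is an automorphism of the Moufang loop M(G,2), and g ↦ φ_g is an injective group homomorphism G → Aut(M(G,2)) provided G is nontrivial. -/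
/-- The map `φ_g : M(G,2) → M(G,2)` fixing `G` pointwise and sending `g₁u ↦ (gg₁)u`. -/
def cheinPhi {G : Type*} [Group G] (g : G) : G ⊕ G → G ⊕ G :=
  fun x => match x with
  | .inl a => .inl a
  | .inr a => .inr (g * a)

/-! `φ_g` is left multiplication by `g` on the coset `Gu`, and (c1)–(c3) are invariant under it:
in (c1) and (c2) the new factor sits on the left, and in (c3) it cancels,
`(g g₂)⁻¹ (g g₁) = g₂⁻¹ g₁`. So `g ↦ φ_g` is the left regular action of `G` on `Gu`,
which is faithful and acts by loop automorphisms. -/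

section

variable {G : Type*} [Group G]

@[simp]
theorem cheinPhi_inl (g a : G) : cheinPhi g (.inl a) = .inl a := rfl

@[simp]
theorem cheinPhi_inr (g a : G) : cheinPhi g (.inr a) = .inr (g * a) := rfl

theorem cheinPhi_one : cheinPhi (1 : G) = id := by
  funext x
  rcases x with a | a <;> simp

theorem cheinPhi_mul (g h : G) : cheinPhi (g * h) = cheinPhi g ∘ cheinPhi h := by
  funext x
  rcases x with a | a <;> simp [mul_assoc]

theorem cheinPhi_map_mul (g : G) (x y : G ⊕ G) :
    cheinPhi g (x * y) = cheinPhi g x * cheinPhi g y := by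
  rcases x with a | a <;> rcases y with b | b
  · rfl
  · exact congrArg Sum.inr (mul_assoc g b a).symm
  · exact congrArg Sum.inr (mul_assoc g a b⁻¹).symm
  · exact congrArg Sum.inl (by rw [mul_inv_rev, mul_assoc, inv_mul_cancel_left])

theorem cheinPhi_inv_apply_cheinPhi (g : G) (x : G ⊕ G) : cheinPhi g⁻¹ (cheinPhi g x) = x :=
  congrFun (f := cheinPhi g⁻¹ ∘ cheinPhi g) (g := id)
    (by rw [← cheinPhi_mul, inv_mul_cancel, cheinPhi_one]) x

def cheinAut (g : G) : MulAut (G ⊕ G) where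
  toFun := cheinPhi g
  invFun := cheinPhi g⁻¹
  left_inv := cheinPhi_inv_apply_cheinPhi g
  right_inv x := by simpa only [inv_inv] using cheinPhi_inv_apply_cheinPhi g⁻¹ x
  map_mul' := cheinPhi_map_mul g

theorem cheinPhi_injective : Function.Injective (cheinPhi : G → G ⊕ G → G ⊕ G) := by
  intro g h hgh
  simpa using congrFun hgh (.inr 1)

end

/-- For each `g ∈ G`, the map `φ_g` is an automorphism of the Moufang loop `M(G,2)`,
and `g ↦ φ_g` is an injective group homomorphism `G → Aut(M(G,2))` provided `G` is
nontrivial. -/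
theorem cheinPhi_injective_hom (G : Type*) [Group G] :
    (∀ g : G, Function.Bijective (cheinPhi g)) ∧
    (∀ (g : G) (x y : G ⊕ G), cheinPhi g (x * y) = cheinPhi g x * cheinPhi g y) ∧
    (∀ g h : G, cheinPhi (g * h) = cheinPhi g ∘ cheinPhi h) ∧
    (Nontrivial G → Function.Injective fun g : G => cheinPhi g) :=
  ⟨fun g => (cheinAut g).bijective, cheinPhi_map_mul, cheinPhi_mul,
    fun _ => cheinPhi_injective⟩
end

section
/- Let Δ = (I,E) be a finite connected graph and for i ∈ I let v(i) be the number of edges incident to i. With the F₂-cochain complex C•(Δ) as above, dim_{F₂} Z¹(Δ) = Σ_{i∈I}(v(i) − 1) = 2|E| − |I|, where Z¹(Δ) = ker d¹. -/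
open Finset

attribute [local instance] Classical.propDecidable

variable (V : Type) [Fintype V] [DecidableEq V]

/-- The set of `r`-simplices of the simplicial complex `E(Δ)` associated to the graph
`Δ = (V, E)`: sets of `r+1` edges of `Δ` having a common vertex. -/
def Simp (G : SimpleGraph V) (r : ℕ) : Type :=
  {σ : Finset (Sym2 V) // σ.card = r + 1 ∧ (∀ e ∈ σ, e ∈ G.edgeSet) ∧ ∃ v : V, ∀ e ∈ σ, v ∈ e}

noncomputable instance (G : SimpleGraph V) (r : ℕ) : Fintype (Simp V G r) :=
  Subtype.fintype _

/-- `C^r(Δ)`: the `𝔽₂`-vector space of `r`-cochains, i.e. functions from the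
`r`-simplices to `𝔽₂`; the characteristic functions `a_σ` form its canonical basis. -/
abbrev Cochain (G : SimpleGraph V) (r : ℕ) : Type := Simp V G r → ZMod 2

/-- The coboundary map `d^r : C^r(Δ) → C^{r+1}(Δ)`, `a_σ ↦ Σ_{τ > σ} a_τ`;
equivalently `(d^r f)(τ) = Σ_{σ < τ} f(σ)`. -/
noncomputable def cobound (G : SimpleGraph V) (r : ℕ) :
    Cochain V G r →ₗ[ZMod 2] Cochain V G (r + 1) where
  toFun f := fun τ => ∑ σ : Simp V G r, if σ.1 ⊆ τ.1 then f σ else 0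
  map_add' f g := by
    funext τ
    simp only [Pi.add_apply]
    rw [← Finset.sum_add_distrib]
    exact Finset.sum_congr rfl fun σ _ => by split_ifs <;> simp
  map_smul' c f := by
    funext τ
    simp only [Pi.smul_apply, RingHom.id_apply]
    rw [Finset.smul_sum]
    exact Finset.sum_congr rfl fun σ _ => by split_ifs <;> simp

/-- The `0`-simplex `{e}` associated to an edge `e` of the graph. -/
noncomputable def edgeSimp (G : SimpleGraph V) (e : G.edgeSet) : Simp V G 0 :=
  ⟨{e.1}, by
    refine ⟨Finset.card_singleton _, ?_, ⟨e.1.out.1, ?_⟩⟩ <;>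
      · intro f hf
        rw [Finset.mem_singleton] at hf
        subst hf
        first
          | exact e.2
          | exact Sym2.out_fst_mem _⟩

/-- The basis `0`-cochain `a_e` attached to an edge `e`. -/
noncomputable def basisCochain (G : SimpleGraph V) (e : G.edgeSet) : Cochain V G 0 :=
  fun σ => if σ = edgeSimp V G e then 1 else 0

/-!
Two distinct edges meet in at most one vertex, so every simplex of `E(Δ)` has a unique apex
and the cochain complex splits, vertex by vertex, into the cochains of the full simplex on the
`v(i)` edges at `i`. On a full simplex every `1`-cocycle `c` is a coboundary: fixing a base edge
`ε` at `i`, the triangle relation on `{ε, e, f}` gives `c{e, f} = c{ε, e} + c{ε, f}`, so `c` is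
determined by the `v(i) - 1` free values `c{ε, e}`. Summing over the vertices gives
`Σ (v(i) - 1)`, and since a connected graph with at least two vertices has no isolated vertex, the
handshake lemma turns this into `2|E| - |I|`.
-/

variable {V} {G : SimpleGraph V}

namespace Simp

section Apex

omit [Fintype V] [DecidableEq V]

lemma ext_iff {r : ℕ} {σ τ : Simp V G r} : σ = τ ↔ σ.1 = τ.1 :=
  Subtype.ext_iff

noncomputable def apex {r : ℕ} (σ : Simp V G r) : V := σ.2.2.2.choose

lemma apex_mem {r : ℕ} (σ : Simp V G r) {e : Sym2 V} (he : e ∈ σ.1) : σ.apex ∈ e :=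
  σ.2.2.2.choose_spec e he

lemma mem_incidenceSet_apex {r : ℕ} (σ : Simp V G r) {e : Sym2 V} (he : e ∈ σ.1) :
    e ∈ G.incidenceSet σ.apex :=
  ⟨σ.2.2.1 e he, σ.apex_mem he⟩

lemma eq_apex {r : ℕ} (σ : Simp V G r) (hr : 0 < r) {v : V} (hv : ∀ e ∈ σ.1, v ∈ e) :
    v = σ.apex := by
  obtain ⟨e, he, f, hf, hef⟩ := Finset.one_lt_card.1 (by rw [σ.2.1]; omega)
  by_contra hne
  exact hef (Sym2.eq_of_ne_mem hne (hv e he) (σ.apex_mem he) (hv f hf) (σ.apex_mem hf))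

end Apex

section Faces

omit [Fintype V]

variable {i : V} {e f g : Sym2 V}

def pair (he : e ∈ G.incidenceSet i) (hf : f ∈ G.incidenceSet i) (hef : e ≠ f) :
    Simp V G 1 :=
  ⟨{e, f}, card_pair hef, by simp [he.1, hf.1], i, by simp [he.2, hf.2]⟩

def triple (he : e ∈ G.incidenceSet i) (hf : f ∈ G.incidenceSet i) (hg : g ∈ G.incidenceSet i)
    (hef : e ≠ f) (heg : e ≠ g) (hfg : f ≠ g) : Simp V G 2 :=
  ⟨{e, f, g}, card_eq_three.2 ⟨e, f, g, hef, heg, hfg, rfl⟩, by simp [he.1, hf.1, hg.1], i,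
    by simp [he.2, hf.2, hg.2]⟩

lemma apex_pair (he : e ∈ G.incidenceSet i) (hf : f ∈ G.incidenceSet i) (hef : e ≠ f) :
    (pair he hf hef).apex = i :=
  ((pair he hf hef).eq_apex one_pos (by simp [pair, he.2, hf.2])).symm

@[simp]
lemma val_pair (he : e ∈ G.incidenceSet i) (hf : f ∈ G.incidenceSet i) (hef : e ≠ f) :
    (pair he hf hef).1 = {e, f} :=
  rfl

lemma pair_comm (he : e ∈ G.incidenceSet i) (hf : f ∈ G.incidenceSet i) (hef : e ≠ f) :
    pair he hf hef = pair hf he hef.symm :=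
  Subtype.ext (Finset.pair_comm e f)

lemma exists_eq_pair (σ : Simp V G 1) :
    ∃ (i : V) (e f : Sym2 V) (he : e ∈ G.incidenceSet i) (hf : f ∈ G.incidenceSet i)
      (hef : e ≠ f), σ = pair he hf hef := by
  obtain ⟨e, f, hef, hσ⟩ := card_eq_two.1 σ.2.1
  exact ⟨σ.apex, e, f, σ.mem_incidenceSet_apex (by simp [hσ]),
    σ.mem_incidenceSet_apex (by simp [hσ]), hef, Subtype.ext hσ⟩

lemma exists_eq_triple (τ : Simp V G 2) :
    ∃ (i : V) (e f g : Sym2 V) (he : e ∈ G.incidenceSet i) (hf : f ∈ G.incidenceSet i)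
      (hg : g ∈ G.incidenceSet i) (hef : e ≠ f) (heg : e ≠ g) (hfg : f ≠ g),
      τ = triple he hf hg hef heg hfg := by
  obtain ⟨e, f, g, hef, heg, hfg, hτ⟩ := card_eq_three.1 τ.2.1
  exact ⟨τ.apex, e, f, g, τ.mem_incidenceSet_apex (by simp [hτ]),
    τ.mem_incidenceSet_apex (by simp [hτ]), τ.mem_incidenceSet_apex (by simp [hτ]),
    hef, heg, hfg, Subtype.ext hτ⟩

end Faces

end Simp

lemma Finset.eq_pair_of_card_eq_two_of_subset_triple {α : Type*} [DecidableEq α] {e f g : α}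
    {s : Finset α} (hs : s.card = 2) (hsub : s ⊆ {e, f, g}) :
    s = {e, f} ∨ s = {e, g} ∨ s = {f, g} := by
  obtain ⟨a, b, hab, rfl⟩ := card_eq_two.1 hs
  have ha : a ∈ ({e, f, g} : Finset α) := hsub (by simp)
  have hb : b ∈ ({e, f, g} : Finset α) := hsub (by simp)
  simp only [mem_insert, mem_singleton] at ha hb
  rcases ha with rfl | rfl | rfl <;> rcases hb with rfl | rfl | rfl <;>
    simp_all [Finset.pair_comm]

open Simp in
lemma cobound_one_triple (c : Cochain V G 1) {i : V} {e f g : Sym2 V}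
    (he : e ∈ G.incidenceSet i) (hf : f ∈ G.incidenceSet i) (hg : g ∈ G.incidenceSet i)
    (hef : e ≠ f) (heg : e ≠ g) (hfg : f ≠ g) :
    cobound V G 1 c (triple he hf hg hef heg hfg) =
      c (pair he hf hef) + c (pair he hg heg) + c (pair hf hg hfg) := by
  have hfaces : univ.filter (fun σ : Simp V G 1 => σ.1 ⊆ {e, f, g}) =
      {pair he hf hef, pair he hg heg, pair hf hg hfg} := by
    ext σ
    simp only [mem_filter, mem_univ, true_and, mem_insert, mem_singleton, Simp.ext_iff,
      val_pair]
    refine ⟨Finset.eq_pair_of_card_eq_two_of_subset_triple σ.2.1, ?_⟩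
    rintro (h | h | h) <;> rw [h] <;> intro x <;> simp <;> tauto
  have h₁ : pair he hf hef ∉ ({pair he hg heg, pair hf hg hfg} : Finset (Simp V G 1)) := by
    simp only [mem_insert, mem_singleton, Simp.ext_iff, val_pair, not_or]
    constructor <;> intro h
    · have hf' : f ∈ ({e, g} : Finset (Sym2 V)) := by rw [← h]; simp
      simp [hef.symm, hfg] at hf'
    · have he' : e ∈ ({f, g} : Finset (Sym2 V)) := by rw [← h]; simp
      simp [hef, heg] at he'
  have h₂ : pair he hg heg ≠ pair hf hg hfg := by
    simp only [ne_eq, Simp.ext_iff, val_pair]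
    intro h
    have he' : e ∈ ({f, g} : Finset (Sym2 V)) := by rw [← h]; simp
    simp [hef, heg] at he'
  show ∑ σ, (if σ.1 ⊆ {e, f, g} then c σ else 0) = _
  rw [← sum_filter, hfaces, sum_insert h₁, sum_pair h₂, add_assoc]

section StarCoords

variable (G)

section BaseEdge

omit [Fintype V] [DecidableEq V]

noncomputable def baseEdge (i : V) : Sym2 V :=
  if h : (G.incidenceSet i).Nonempty then h.choose else s(i, i)

lemma baseEdge_mem {i : V} (h : (G.incidenceSet i).Nonempty) :
    baseEdge G i ∈ G.incidenceSet i := by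
  rw [baseEdge, dif_pos h]
  exact h.choose_spec

end BaseEdge

abbrev StarCoords : Type :=
  ∀ i : V, {e : Sym2 V // e ∈ (G.incidenceFinset i).erase (baseEdge G i)} → ZMod 2

lemma mem_incidenceSet_of_mem_erase {i : V} {e : Sym2 V}
    (h : e ∈ (G.incidenceFinset i).erase (baseEdge G i)) : e ∈ G.incidenceSet i :=
  (G.mem_incidenceFinset i e).1 (mem_of_mem_erase h)

noncomputable def toStarCoords : Cochain V G 1 →ₗ[ZMod 2] StarCoords G where
  toFun c _ x :=
    have hx := mem_incidenceSet_of_mem_erase G x.2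
    c (Simp.pair (baseEdge_mem G ⟨_, hx⟩) hx (ne_of_mem_erase x.2).symm)
  map_add' _ _ := rfl
  map_smul' _ _ := rfl

noncomputable def starCoord (i : V) (e : Sym2 V) : StarCoords G →ₗ[ZMod 2] ZMod 2 :=
  if h : e ∈ (G.incidenceFinset i).erase (baseEdge G i) then
    (LinearMap.proj ⟨e, h⟩).comp (LinearMap.proj i : StarCoords G →ₗ[ZMod 2] _)
  else 0

lemma starCoord_baseEdge (i : V) : starCoord G i (baseEdge G i) = 0 := by
  rw [starCoord, dif_neg (notMem_erase _ _)]

lemma starCoord_apply_of_mem {i : V} {e : Sym2 V}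
    (h : e ∈ (G.incidenceFinset i).erase (baseEdge G i)) (c : StarCoords G) :
    starCoord G i e c = c i ⟨e, h⟩ := by
  rw [starCoord, dif_pos h]
  rfl

noncomputable def ofStarCoords : StarCoords G →ₗ[ZMod 2] Cochain V G 1 :=
  LinearMap.pi fun σ => ∑ e ∈ σ.1, starCoord G σ.apex e

variable {G}

open Simp

lemma ofStarCoords_pair (c : StarCoords G) {i : V} {e f : Sym2 V} (he : e ∈ G.incidenceSet i)
    (hf : f ∈ G.incidenceSet i) (hef : e ≠ f) :
    ofStarCoords G c (pair he hf hef) = starCoord G i e c + starCoord G i f c := by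
  simp [ofStarCoords, apex_pair, sum_pair hef]

lemma ofStarCoords_mem_ker (c : StarCoords G) :
    ofStarCoords G c ∈ LinearMap.ker (cobound V G 1) := by
  rw [LinearMap.mem_ker]
  funext τ
  obtain ⟨i, e, f, g, he, hf, hg, hef, heg, hfg, rfl⟩ := τ.exists_eq_triple
  rw [cobound_one_triple, ofStarCoords_pair, ofStarCoords_pair, ofStarCoords_pair,
    Pi.zero_apply]
  linear_combination (starCoord G i e c + starCoord G i f c + starCoord G i g c) *
    CharTwo.two_eq_zero (R := ZMod 2)

lemma toStarCoords_ofStarCoords (c : StarCoords G) : toStarCoords G (ofStarCoords G c) = c := by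
  funext i x
  show ofStarCoords G c (pair _ _ _) = c i x
  rw [ofStarCoords_pair, starCoord_baseEdge, starCoord_apply_of_mem G x.2, LinearMap.zero_apply,
    zero_add]

lemma starCoord_toStarCoords (c : Cochain V G 1) {i : V} {e : Sym2 V} (he : e ∈ G.incidenceSet i)
    (hne : baseEdge G i ≠ e) :
    starCoord G i e (toStarCoords G c) = c (pair (baseEdge_mem G ⟨e, he⟩) he hne) := by
  rw [starCoord_apply_of_mem G (mem_erase.2 ⟨hne.symm, (G.mem_incidenceFinset i e).2 he⟩)]
  rfl

lemma apply_pair_of_mem_ker {c : Cochain V G 1} (hc : c ∈ LinearMap.ker (cobound V G 1))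
    {i : V} {e f : Sym2 V} (he : e ∈ G.incidenceSet i) (hf : f ∈ G.incidenceSet i)
    (hef : e ≠ f) :
    c (pair he hf hef) =
      starCoord G i e (toStarCoords G c) + starCoord G i f (toStarCoords G c) := by
  have hb := baseEdge_mem G ⟨e, he⟩
  by_cases hbe : baseEdge G i = e
  · subst hbe
    rw [starCoord_baseEdge, LinearMap.zero_apply, zero_add, starCoord_toStarCoords c hf hef]
  by_cases hbf : baseEdge G i = f
  · subst hbf
    rw [starCoord_baseEdge, LinearMap.zero_apply, add_zero, starCoord_toStarCoords c he hbe,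
      Simp.pair_comm]
  have htri := congrFun (LinearMap.mem_ker.1 hc) (triple hb he hf hbe hbf hef)
  rw [cobound_one_triple] at htri
  rw [starCoord_toStarCoords c he hbe, starCoord_toStarCoords c hf hbf]
  exact (CharTwo.add_eq_zero.1 htri).symm

lemma ofStarCoords_toStarCoords {c : Cochain V G 1} (hc : c ∈ LinearMap.ker (cobound V G 1)) :
    ofStarCoords G (toStarCoords G c) = c := by
  funext σ
  obtain ⟨i, e, f, he, hf, hef, rfl⟩ := σ.exists_eq_pair
  rw [ofStarCoords_pair, apply_pair_of_mem_ker hc]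

variable (G)

noncomputable def kerCoboundOneEquiv : LinearMap.ker (cobound V G 1) ≃ₗ[ZMod 2] StarCoords G :=
  { (toStarCoords G).comp (LinearMap.ker (cobound V G 1)).subtype with
    invFun := fun c => ⟨ofStarCoords G c, ofStarCoords_mem_ker c⟩
    left_inv := fun c => Subtype.ext (ofStarCoords_toStarCoords c.2)
    right_inv := toStarCoords_ofStarCoords }

lemma card_erase_baseEdge (i : V) :
    #((G.incidenceFinset i).erase (baseEdge G i)) = G.degree i - 1 := by
  rcases (G.incidenceSet i).eq_empty_or_nonempty with h | h
  · have hempty : G.incidenceFinset i = ∅ := by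
      rw [← coe_eq_empty, SimpleGraph.coe_incidenceFinset, h]
    rw [← SimpleGraph.card_incidenceFinset_eq_degree, hempty]
    rfl
  · rw [card_erase_of_mem ((G.mem_incidenceFinset i _).2 (baseEdge_mem G h)),
      SimpleGraph.card_incidenceFinset_eq_degree]

lemma finrank_ker_cobound_one :
    Module.finrank (ZMod 2) (LinearMap.ker (cobound V G 1)) = ∑ i : V, (G.degree i - 1) := by
  rw [(kerCoboundOneEquiv G).finrank_eq, Module.finrank_pi_fintype]
  simp only [Module.finrank_pi, Fintype.card_coe, card_erase_baseEdge]

end StarCoords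

omit [DecidableEq V] in
lemma SimpleGraph.Preconnected.sum_degree_sub_one (hG : G.Preconnected) :
    ∑ i : V, (G.degree i - 1) = 2 * Fintype.card G.edgeSet - Fintype.card V := by
  rw [← SimpleGraph.edgeFinset_card, ← SimpleGraph.sum_degrees_eq_twice_card_edges]
  rcases subsingleton_or_nontrivial V with hV | hV
  · obtain rfl := Subsingleton.elim G ⊥
    simp
  · rw [sum_tsub_distrib _ fun i _ => hG.degree_pos_of_nontrivial i]
    simp

/-- Lemma 4.16(a): for a finite connected graph `Δ = (V,E)`, with `v(i)` the number
of edges incident to the vertex `i`,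
`dim_{𝔽₂} Z¹(Δ) = Σ_{i∈V} (v(i) − 1) = 2|E| − |V|`, where `Z¹(Δ) = ker d¹`. -/
theorem dim_Z1 (G : SimpleGraph V) (hconn : G.Connected) :
    Module.finrank (ZMod 2) (LinearMap.ker (cobound V G 1)) = ∑ i : V, (G.degree i - 1) ∧
    Module.finrank (ZMod 2) (LinearMap.ker (cobound V G 1)) =
      2 * Fintype.card G.edgeSet - Fintype.card V :=
  ⟨finrank_ker_cobound_one G,
    (finrank_ker_cobound_one G).trans hconn.preconnected.sum_degree_sub_one⟩
end
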